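/- Let A, B be real n×n matrices, both invertible, and let b ∈ ℝ^n be such that B⁻¹ b is entrywise nonnegative and B⁻¹ b ≠ 0. If σ_min(A⁻¹ B) > 1, then the generalized absolute value equation A x − B |x| = b has no solution x ∈ ℝ^n. -/

import Mathlib

/-!
A solution satisfies `A x = B |x| + b`, i.e. the fixed-point form `x = M y` with
`M = A⁻¹ B` and `y = |x| + B⁻¹ b`. Since `B⁻¹ b ≥ 0`, every entry of `y` dominates `|x|`, so
`‖x‖ ≤ ‖y‖`, and `y ≠ 0` because `B⁻¹ b ≠ 0`. Then `‖x‖ = ‖M y‖ ≥ σ_min(M) ‖y‖ > ‖y‖ ≥ ‖x‖`.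
-/

/-- The Euclidean (`ℓ2`) norm of a vector in `ℝ^n`. -/
noncomputable def euclNorm {n : ℕ} (x : Fin n → ℝ) : ℝ :=
  Real.sqrt (∑ i, x i ^ 2)

/-- The largest singular value of a real square matrix: the operator norm
induced by the Euclidean vector norm, i.e. the supremum of `‖M x‖₂` over unit
vectors `x`. -/
noncomputable def sigmaMax {n : ℕ} (M : Matrix (Fin n) (Fin n) ℝ) : ℝ :=
  sSup {r : ℝ | ∃ x : Fin n → ℝ, euclNorm x = 1 ∧ r = euclNorm (M.mulVec x)}

/-- The smallest singular value of a real square matrix: the infimum of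
`‖M x‖₂` over unit vectors `x`. -/
noncomputable def sigmaMin {n : ℕ} (M : Matrix (Fin n) (Fin n) ℝ) : ℝ :=
  sInf {r : ℝ | ∃ x : Fin n → ℝ, euclNorm x = 1 ∧ r = euclNorm (M.mulVec x)}

open Matrix

lemma euclNorm_nonneg {n : ℕ} (x : Fin n → ℝ) : 0 ≤ euclNorm x :=
  Real.sqrt_nonneg _

lemma euclNorm_pos {n : ℕ} {x : Fin n → ℝ} (hx : x ≠ 0) : 0 < euclNorm x := by
  obtain ⟨j, hj⟩ := Function.ne_iff.mp hx
  refine Real.sqrt_pos.mpr (Finset.sum_pos' (fun i _ => sq_nonneg _) ⟨j, Finset.mem_univ j, ?_⟩)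
  exact pow_pos (abs_pos.mpr hj) 2 |>.trans_eq (sq_abs _)

lemma euclNorm_smul {n : ℕ} (c : ℝ) (x : Fin n → ℝ) :
    euclNorm (c • x) = |c| * euclNorm x := by
  simp only [euclNorm, Pi.smul_apply, smul_eq_mul, mul_pow, ← Finset.mul_sum,
    Real.sqrt_mul (sq_nonneg c), Real.sqrt_sq_eq_abs]

lemma euclNorm_le_of_abs_le {n : ℕ} {x y : Fin n → ℝ} (h : ∀ i, |x i| ≤ y i) :
    euclNorm x ≤ euclNorm y :=
  Real.sqrt_le_sqrt <| Finset.sum_le_sum fun i _ =>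
    sq_le_sq' (abs_le.mp (h i)).1 (le_of_abs_le (h i))

lemma sigmaMin_mul_euclNorm_le {n : ℕ} (M : Matrix (Fin n) (Fin n) ℝ) (v : Fin n → ℝ) :
    sigmaMin M * euclNorm v ≤ euclNorm (M *ᵥ v) := by
  rcases eq_or_ne v 0 with rfl | hv
  · simp [euclNorm]
  have hpos : 0 < euclNorm v := euclNorm_pos hv
  have hunit : euclNorm ((euclNorm v)⁻¹ • v) = 1 := by
    rw [euclNorm_smul, abs_of_pos (inv_pos.mpr hpos), inv_mul_cancel₀ hpos.ne']
  have hbdd : BddBelow {r : ℝ | ∃ x : Fin n → ℝ, euclNorm x = 1 ∧ r = euclNorm (M *ᵥ x)} :=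
    ⟨0, by rintro r ⟨x, -, rfl⟩; exact euclNorm_nonneg _⟩
  have hinf := csInf_le hbdd ⟨_, hunit, rfl⟩
  rw [mulVec_smul, euclNorm_smul, abs_of_pos (inv_pos.mpr hpos)] at hinf
  exact mul_comm (sigmaMin M) _ ▸ (le_inv_mul_iff₀ hpos).mp hinf

lemma eq_inv_mul_mulVec_add_of_mulVec_sub_mulVec_eq {ι R : Type*} [Fintype ι] [DecidableEq ι]
    [CommRing R] {A B : Matrix ι ι R} (hA : IsUnit A) (hB : IsUnit B) {x v b : ι → R}
    (h : A *ᵥ x - B *ᵥ v = b) : x = (A⁻¹ * B) *ᵥ (v + B⁻¹ *ᵥ b) := by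
  rw [← mulVec_mulVec, mulVec_add, mulVec_mulVec,
    mul_nonsing_inv _ ((isUnit_iff_isUnit_det B).mp hB), one_mulVec, ← h, add_sub_cancel,
    mulVec_mulVec, nonsing_inv_mul _ ((isUnit_iff_isUnit_det A).mp hA), one_mulVec]

/-- If `A` and `B` are invertible, `B⁻¹ b ≥ 0` entrywise with
`B⁻¹ b ≠ 0`, and `σ_min(A⁻¹ B) > 1`, then the GAVE `A x − B |x| = b` has no
solution. -/
theorem gave_no_solution_of_sigmaMin_inv_mul {n : ℕ} (A B : Matrix (Fin n) (Fin n) ℝ)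
    (hA : IsUnit A) (hB : IsUnit B) (b : Fin n → ℝ)
    (hb : ∀ i, 0 ≤ B⁻¹.mulVec b i) (hb0 : B⁻¹.mulVec b ≠ 0)
    (h : 1 < sigmaMin (A⁻¹ * B)) :
    ¬ ∃ x : Fin n → ℝ, A.mulVec x - B.mulVec (fun i => |x i|) = b := by
  rintro ⟨x, hx⟩
  set y := (fun i => |x i|) + B⁻¹ *ᵥ b
  have hxy : x = (A⁻¹ * B) *ᵥ y := eq_inv_mul_mulVec_add_of_mulVec_sub_mulVec_eq hA hB hx
  have hy : y ≠ 0 := fun hy0 =>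
    hb0 ((add_eq_zero_iff_of_nonneg (fun i => abs_nonneg (x i)) hb).mp hy0).2
  have : euclNorm x < euclNorm x := calc
    euclNorm x ≤ euclNorm y := euclNorm_le_of_abs_le fun i => le_add_of_nonneg_right (hb i)
    _ < sigmaMin (A⁻¹ * B) * euclNorm y := lt_mul_of_one_lt_left (euclNorm_pos hy) h
    _ ≤ euclNorm ((A⁻¹ * B) *ᵥ y) := sigmaMin_mul_euclNorm_le _ _
    _ = euclNorm x := by rw [← hxy]
  exact lt_irrefl _ this
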